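/- Mollifier-kernel bound: for a mollifier ρ_ε(x) = ε⁻² ρ(x/ε) with ρ ∈ C_c^∞(ℝ²), ρ ≥ 0, ∫ρ = 1, and ω₀ ∈ L^∞(ℝ²), the kernel L₁(x,y) = ρ_ε(x−y) ω₀(y) satisfies ‖L₁‖_{**} ≤ C ‖ω₀‖_{L^∞} with C independent of ε, where ‖L‖_{**} = sup_{x,y}(|x−y|²|L(x,y)| + |x−y|³|∇_x L(x,y)|) + sup_x ‖L(x,·)‖_{L¹(B₁(x)ᶜ)}. -/

import Mathlib

open MeasureTheory Filter Set Topology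

local notation "E" => EuclideanSpace ℝ (Fin 2)

set_option maxHeartbeats 1000000

set_option maxHeartbeats 1000000 in
/-- Mollifier-kernel bound: for a mollifier `ρ_ε(x) = ε⁻² ρ(x/ε)` with
`ρ ∈ C_c^∞(ℝ²)`, `ρ ≥ 0`, `∫ρ = 1`, and `ω₀ ∈ L^∞` with `|ω₀| ≤ Mω`, the kernel
`L₁(x,y) = ρ_ε(x−y) ω₀(y)` satisfies `‖L₁‖_{**} ≤ C Mω` with `C` independent of
`ε ∈ (0,1]`. -/
theorem stmt9 (ρ : E → ℝ) (hρs : ContDiff ℝ (⊤ : ℕ∞) ρ) (hρc : HasCompactSupport ρ)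
    (hρ0 : ∀ x, 0 ≤ ρ x) (hρ1 : ∫ x : E, ρ x = 1) :
    ∃ C : ℝ, 0 < C ∧
      ∀ (ω₀ : E → ℝ) (Mω : ℝ), (∀ y, |ω₀ y| ≤ Mω) →
      ∀ ε : ℝ, 0 < ε → ε ≤ 1 →
        (∀ x y : E,
          dist x y ^ 2 * |(ε ^ 2)⁻¹ * ρ (ε⁻¹ • (x - y)) * ω₀ y|
            + dist x y ^ 3 *
              ‖fderiv ℝ (fun z : E => (ε ^ 2)⁻¹ * ρ (ε⁻¹ • (z - y)) * ω₀ y) x‖ ≤ C * Mω) ∧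
        (∀ x : E,
          ∫ y in (Metric.ball x 1)ᶜ, |(ε ^ 2)⁻¹ * ρ (ε⁻¹ • (x - y)) * ω₀ y| ≤ C * Mω) := by
  obtain ⟨M, hM⟩ := hρc.exists_bound_of_continuous hρs.continuous
  obtain ⟨M', hM'⟩ := (hρc.fderiv ℝ).exists_bound_of_continuous (hρs.continuous_fderiv (by simp))
  obtain ⟨R₀, hR₀⟩ := hρc.isBounded.subset_closedBall 0
  set R : ℝ := max R₀ 0 with hRdef
  have hR : tsupport ρ ⊆ Metric.closedBall 0 R :=
    hR₀.trans (Metric.closedBall_subset_closedBall (le_max_left _ _))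
  have hRnn : 0 ≤ R := le_max_right _ _
  have hMnn : 0 ≤ M := (norm_nonneg _).trans (hM 0)
  have hM'nn : 0 ≤ M' := (norm_nonneg _).trans (hM' 0)
  have hρd : Differentiable ℝ ρ := hρs.differentiable (by simp)
  refine ⟨R ^ 2 * M + R ^ 3 * M' + 1, by positivity, ?_⟩
  intro ω₀ Mω hω ε hε hε1
  have hMωnn : 0 ≤ Mω := (abs_nonneg _).trans (hω 0)
  have hCMω : 0 ≤ (R ^ 2 * M + R ^ 3 * M' + 1) * Mω := by positivity
  have key : R ^ 2 * M * Mω + R ^ 3 * M' * Mω ≤ (R ^ 2 * M + R ^ 3 * M' + 1) * Mω := by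
    nlinarith
  constructor
  · intro x y
    by_cases hd : dist x y ≤ R * ε
    · -- near-diagonal case
      have hdnn : (0:ℝ) ≤ dist x y := dist_nonneg
      have habs : |(ε ^ 2)⁻¹ * ρ (ε⁻¹ • (x - y)) * ω₀ y| ≤ (ε ^ 2)⁻¹ * M * Mω := by
        rw [abs_mul, abs_mul]
        have h1 : |(ε ^ 2)⁻¹| = (ε ^ 2)⁻¹ := abs_of_pos (by positivity)
        rw [h1]
        have := hM (ε⁻¹ • (x - y))
        rw [Real.norm_eq_abs] at this
        exact mul_le_mul (mul_le_mul_of_nonneg_left this (by positivity)) (hω y)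
          (abs_nonneg _) (by positivity)
      -- fderiv bound
      set c : ℝ := (ε ^ 2)⁻¹ * ω₀ y with hc
      have hfun : (fun z : E => (ε ^ 2)⁻¹ * ρ (ε⁻¹ • (z - y)) * ω₀ y)
          = fun z : E => c * ρ (ε⁻¹ • (z - y)) := by
        funext z; rw [hc]; ring
      have hg : HasFDerivAt (fun z : E => ε⁻¹ • (z - y))
          (ε⁻¹ • ContinuousLinearMap.id ℝ E) x :=
        ((hasFDerivAt_id x).sub_const y).const_smul ε⁻¹
      have hD : HasFDerivAt (fun z : E => c * ρ (ε⁻¹ • (z - y)))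
          (c • ((fderiv ℝ ρ (ε⁻¹ • (x - y))).comp (ε⁻¹ • ContinuousLinearMap.id ℝ E))) x :=
        ((hρd (ε⁻¹ • (x - y))).hasFDerivAt.comp x hg).const_mul c
      have hDnorm : ‖fderiv ℝ (fun z : E => (ε ^ 2)⁻¹ * ρ (ε⁻¹ • (z - y)) * ω₀ y) x‖
          ≤ (ε ^ 2)⁻¹ * Mω * (M' * ε⁻¹) := by
        rw [hfun, hD.fderiv]
        calc ‖c • ((fderiv ℝ ρ (ε⁻¹ • (x - y))).comp (ε⁻¹ • ContinuousLinearMap.id ℝ E))‖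
            ≤ ‖c‖ * ‖(fderiv ℝ ρ (ε⁻¹ • (x - y))).comp (ε⁻¹ • ContinuousLinearMap.id ℝ E)‖ :=
              ContinuousLinearMap.opNorm_smul_le _ _
          _ ≤ ‖c‖ * (‖fderiv ℝ ρ (ε⁻¹ • (x - y))‖ * ‖ε⁻¹ • ContinuousLinearMap.id ℝ E‖) :=
              mul_le_mul_of_nonneg_left (ContinuousLinearMap.opNorm_comp_le _ _)
                (norm_nonneg _)
          _ ≤ ((ε ^ 2)⁻¹ * Mω) * (M' * ε⁻¹) := by
              apply mul_le_mul
              · rw [hc, Real.norm_eq_abs, abs_mul, abs_of_pos (show (0:ℝ) < (ε ^ 2)⁻¹ by positivity)]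
                exact mul_le_mul_of_nonneg_left (hω y) (by positivity)
              · apply mul_le_mul (hM' _)
                · calc ‖(ε⁻¹:ℝ) • ContinuousLinearMap.id ℝ E‖
                        ≤ ‖(ε⁻¹:ℝ)‖ * ‖ContinuousLinearMap.id ℝ E‖ :=
                        ContinuousLinearMap.opNorm_smul_le _ _
                    _ ≤ ‖(ε⁻¹:ℝ)‖ * 1 :=
                        mul_le_mul_of_nonneg_left ContinuousLinearMap.norm_id_le (norm_nonneg _)
                    _ = ε⁻¹ := by
                        rw [mul_one, Real.norm_eq_abs, abs_of_pos (inv_pos.mpr hε)]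
                · positivity
                · exact hM'nn
              · positivity
              · positivity
      calc dist x y ^ 2 * |(ε ^ 2)⁻¹ * ρ (ε⁻¹ • (x - y)) * ω₀ y|
            + dist x y ^ 3 * ‖fderiv ℝ (fun z : E => (ε ^ 2)⁻¹ * ρ (ε⁻¹ • (z - y)) * ω₀ y) x‖
          ≤ (R * ε) ^ 2 * ((ε ^ 2)⁻¹ * M * Mω) + (R * ε) ^ 3 * ((ε ^ 2)⁻¹ * Mω * (M' * ε⁻¹)) := by
            gcongr <;> first | positivity | assumption
        _ = R ^ 2 * M * Mω + R ^ 3 * M' * Mω := by field_simp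
        _ ≤ (R ^ 2 * M + R ^ 3 * M' + 1) * Mω := key
    · -- far case: everything vanishes near x
      push_neg at hd
      have hzero : ∀ z : E, R * ε < dist z y → ρ (ε⁻¹ • (z - y)) = 0 := by
        intro z hz
        apply image_eq_zero_of_notMem_tsupport
        intro hmem
        have := hR hmem
        rw [Metric.mem_closedBall, dist_zero_right, norm_smul, Real.norm_eq_abs,
          abs_of_pos (inv_pos.mpr hε)] at this
        have hzy : ‖z - y‖ = dist z y := by rw [dist_eq_norm]
        rw [hzy] at this
        have : dist z y ≤ R * ε := by
          rw [inv_mul_le_iff₀ hε] at this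
          linarith [this]
        linarith
      have hEq : (fun z : E => (ε ^ 2)⁻¹ * ρ (ε⁻¹ • (z - y)) * ω₀ y) =ᶠ[nhds x]
          fun _ => (0:ℝ) := by
        have hopen : IsOpen {z : E | R * ε < dist z y} :=
          isOpen_lt continuous_const (continuous_id.dist continuous_const)
        filter_upwards [hopen.mem_nhds hd] with z hz
        rw [hzero z hz, mul_zero, zero_mul]
      have h1 : ρ (ε⁻¹ • (x - y)) = 0 := hzero x hd
      rw [h1, hEq.fderiv_eq, fderiv_fun_const]
      simp [hCMω]
  · intro x
    have hne : (ε⁻¹ : ℝ) ≠ 0 := by positivity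
    have hcont : Continuous fun y : E => ρ (ε⁻¹ • (x - y)) := by
      fun_prop
    have hcs : HasCompactSupport fun y : E => ρ (ε⁻¹ • (x - y)) := by
      have : (fun y : E => ρ (ε⁻¹ • (x - y)))
          = ρ ∘ ((Homeomorph.subLeft x).trans (Homeomorph.smulOfNeZero (ε⁻¹:ℝ) hne)) := rfl
      rw [this]
      exact hρc.comp_homeomorph _
    have hint : Integrable (fun y : E => ρ (ε⁻¹ • (x - y))) := hcont.integrable_of_hasCompactSupport hcs
    have hIρ : ∫ y : E, ρ (ε⁻¹ • (x - y)) = ε ^ 2 := by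
      rw [integral_sub_left_eq_self (fun y : E => ρ (ε⁻¹ • y)) volume x,
        Measure.integral_comp_smul volume ρ ε⁻¹, hρ1]
      simp [finrank_euclideanSpace, abs_of_pos, pow_pos hε 2]
    set g : E → ℝ := fun y => (ε ^ 2)⁻¹ * Mω * ρ (ε⁻¹ • (x - y)) with hgdef
    have hgint : Integrable g := (hint.const_mul _)
    have hgnn : ∀ y, 0 ≤ g y := fun y => by
      have := hρ0 (ε⁻¹ • (x - y)); positivity
    have hle : ∀ y, |(ε ^ 2)⁻¹ * ρ (ε⁻¹ • (x - y)) * ω₀ y| ≤ g y := by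
      intro y
      rw [abs_mul, abs_mul, abs_of_pos (show (0:ℝ) < (ε ^ 2)⁻¹ by positivity),
        abs_of_nonneg (hρ0 _), hgdef]
      calc (ε ^ 2)⁻¹ * ρ (ε⁻¹ • (x - y)) * |ω₀ y|
          ≤ (ε ^ 2)⁻¹ * ρ (ε⁻¹ • (x - y)) * Mω := by
            apply mul_le_mul_of_nonneg_left (hω y)
            have := hρ0 (ε⁻¹ • (x - y)); positivity
        _ = (ε ^ 2)⁻¹ * Mω * ρ (ε⁻¹ • (x - y)) := by ring
    have hIg : ∫ y : E, g y = Mω := by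
      rw [hgdef]
      rw [integral_const_mul, hIρ]
      field_simp
    by_cases hfi : IntegrableOn (fun y : E => |(ε ^ 2)⁻¹ * ρ (ε⁻¹ • (x - y)) * ω₀ y|)
        (Metric.ball x 1)ᶜ
    · calc ∫ y in (Metric.ball x 1)ᶜ, |(ε ^ 2)⁻¹ * ρ (ε⁻¹ • (x - y)) * ω₀ y|
          ≤ ∫ y in (Metric.ball x 1)ᶜ, g y :=
            integral_mono hfi hgint.integrableOn (fun y => hle y)
        _ ≤ ∫ y : E, g y := setIntegral_le_integral hgint (Filter.Eventually.of_forall hgnn)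
        _ = Mω := hIg
        _ ≤ (R ^ 2 * M + R ^ 3 * M' + 1) * Mω := by
            nlinarith [mul_nonneg (mul_nonneg (pow_nonneg hRnn 2) hMnn) hMωnn,
              mul_nonneg (mul_nonneg (pow_nonneg hRnn 3) hM'nn) hMωnn]
    · rw [integral_undef hfi]
      exact hCMω
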